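/- Fixed Point Theorem: for any L-formula φ(x,y) with free variables among x and y, there exists an L_A-formula ψ(x) in which y does not occur free, such that the theory BST ∪ {pair, extract, φ-separ} semantically entails the sentence (∃y∀x(x∈y ↔ φ(x,y))) ↔ (∃y∀x(x∈y ↔ ψ(x))). -/

import Mathlib

/-! Write `A` for `A_φ`. By φ-separ, `⟨A, x⟩ ∈ A` iff `φ(x, u)` for some `u = A[A]`: the pair
decodes uniquely because Kuratowski pairs are injective, and extensionality turns `u = A[A]` into
an equality of sets. So `x ∈ A[A] ↔ φ(x, A[A])`, and `A[A]`, which exists by extract, witnesses the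
left-hand side. The right-hand side holds for `ψ(x) := x ∈ A`, witnessed by `A` itself. -/

open FirstOrder FirstOrder.Language

namespace FixedPointTheorem

/-- The language `L` with a single binary relation symbol `∈`. -/
def L0 : Language := ⟨fun _ => Empty, fun n => match n with | 2 => Unit | _ => Empty⟩

/-- The language `L_A`: `L` extended with one constant symbol `A_φ`. -/
abbrev LA : Language := L0[[Unit]]

/-- The constant symbol `A_φ`. -/
def cA : LA.Constants := L0.con ()

/-- The membership relation symbol of `L_A`. -/
def memRel : LA.Relations 2 := Sum.inl Unit.unit

/-- `memF t₁ t₂` is the atomic formula `t₁ ∈ t₂`. -/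
def memF {n : ℕ} (t₁ t₂ : LA.Term (Empty ⊕ Fin n)) : LA.BoundedFormula Empty n :=
  memRel.boundedFormula₂ t₁ t₂

/-- Inclusion of a term in context `n` into the larger context `n + k`. -/
def tl {n : ℕ} (k : ℕ) (t : LA.Term (Empty ⊕ Fin n)) : LA.Term (Empty ⊕ Fin (n + k)) :=
  t.relabel (Sum.map id (Fin.castAdd k))

/-- `z = ⟨a,b⟩` (Kuratowski pair), as the formula
`∃p∃q(∀x(x∈p ↔ x=a) ∧ ∀x(x∈q ↔ (x=a ∨ x=b)) ∧ ∀x(x∈z ↔ (x=p ∨ x=q)))`. -/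
def isPairF {n : ℕ} (z a b : LA.Term (Empty ⊕ Fin n)) : LA.BoundedFormula Empty n :=
  ∃' ∃' (
    (∀' (memF (&⟨n + 2, by omega⟩) (&⟨n, by omega⟩) ⇔
        ((&(⟨n + 2, by omega⟩ : Fin (n + 3))) =' tl 3 a))) ⊓
    (∀' (memF (&⟨n + 2, by omega⟩) (&⟨n + 1, by omega⟩) ⇔
        (((&(⟨n + 2, by omega⟩ : Fin (n + 3))) =' tl 3 a) ⊔
         ((&(⟨n + 2, by omega⟩ : Fin (n + 3))) =' tl 3 b)))) ⊓
    (∀' (memF (&⟨n + 2, by omega⟩) (tl 3 z) ⇔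
        (((&(⟨n + 2, by omega⟩ : Fin (n + 3))) =' (&⟨n, by omega⟩)) ⊔
         ((&(⟨n + 2, by omega⟩ : Fin (n + 3))) =' (&⟨n + 1, by omega⟩))))))

/-- Extensionality: `∀y∀z(∀x(x∈y ↔ x∈z) → y=z)`. -/
def extAx : LA.Sentence :=
  ∀' ∀' ((∀' (memF (&2) (&0) ⇔ memF (&2) (&1))) ⟹ ((&0) =' (&1)))

/-- Basic set theory: the theory whose only axiom is extensionality. -/
def BST : LA.Theory := {extAx}

/-- Pairing: `∀a∀b∃y∀x(x∈y ↔ (x=a ∨ x=b))`. -/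
def pairAx : LA.Sentence :=
  ∀' ∀' ∃' ∀' (memF (&3) (&2) ⇔ (((&3) =' (&0)) ⊔ ((&3) =' (&1))))

/-- Extracting: `∀a∃y∀x(x∈y ↔ ∃z(z=⟨a,x⟩ ∧ z∈a))`. -/
def extractAx : LA.Sentence :=
  ∀' ∃' ∀' (memF (&2) (&1) ⇔ ∃' (isPairF (&3) (&0) (&2) ⊓ memF (&3) (&0)))

/-- `u = v[v]`, i.e. `∀t(t∈u ↔ ∃z(z=⟨v,t⟩ ∧ z∈v))`, here with `v = &1`, `u = &3`
in context `4` (as used in `φ-separ`). -/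
def uEqExtractF : LA.BoundedFormula Empty 4 :=
  ∀' (memF (&4) (&3) ⇔ ∃' (isPairF (&5) (&1) (&4) ⊓ memF (&5) (&1)))

/-- The image in `L_A` of an `L`-formula `φ(x,y)` (free variables `0 = x`, `1 = y`). -/
def phiLA (φ : L0.Formula (Fin 2)) : LA.Formula (Fin 2) :=
  (L0.lhomWithConstants Unit).onFormula φ

/-- `φ-separ`: the axiom `∀x(x∈A_φ ↔ ∃v∃w(x=⟨v,w⟩ ∧ φ(w,v[v])))`, where `φ(w,v[v])`
abbreviates `∃u(u=v[v] ∧ φ(w,u))`. -/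
def separAx (φ : L0.Formula (Fin 2)) : LA.Sentence :=
  ∀' (memF (&0) (Constants.term cA) ⇔
    ∃' ∃' (isPairF (&0) (&1) (&2) ⊓
      ∃' (uEqExtractF ⊓
        BoundedFormula.relabel (fun i => Sum.inr (if i = 0 then (2 : Fin 4) else 3)) (phiLA φ))))

section Kuratowski

variable {α : Type*} (r : α → α → Prop)

def IsKPair (z a b : α) : Prop :=
  ∃ p q, (∀ x, r x p ↔ x = a) ∧ (∀ x, r x q ↔ x = a ∨ x = b) ∧ (∀ x, r x z ↔ x = p ∨ x = q)

/-- `MemExtract r x v` says `x ∈ v[v]`, i.e. `⟨v, x⟩ ∈ v`. -/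
def MemExtract (x v : α) : Prop := ∃ z, IsKPair r z v x ∧ r z v

variable {r}

namespace IsKPair

variable {z a b : α}

lemma left_mem (h : IsKPair r z a b) {w : α} (hw : r w z) : r a w := by
  obtain ⟨p, q, hp, hq, hz⟩ := h
  rcases (hz w).1 hw with rfl | rfl
  exacts [(hp a).2 rfl, (hq a).2 (Or.inl rfl)]

lemma eq_or_eq_of_mem (h : IsKPair r z a b) {w x : α} (hw : r w z) (hx : r x w) :
    x = a ∨ x = b := by
  obtain ⟨p, q, hp, hq, hz⟩ := h
  rcases (hz w).1 hw with rfl | rfl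
  exacts [Or.inl ((hp x).1 hx), (hq x).1 hx]

lemma injective (h : IsKPair r z a b) {a' b' : α} (h' : IsKPair r z a' b') :
    a = a' ∧ b = b' := by
  obtain ⟨p, q, hp, hq, hz⟩ := id h
  obtain ⟨p', q', -, hq', hz'⟩ := id h'
  have ha : a' = a := (hp a').1 (h'.left_mem ((hz p).2 (Or.inl rfl)))
  subst ha
  have hb : b = a' ∨ b = b' :=
    h'.eq_or_eq_of_mem ((hz q).2 (Or.inr rfl)) ((hq b).2 (Or.inr rfl))
  have hb' : b' = a' ∨ b' = b :=
    h.eq_or_eq_of_mem ((hz' q').2 (Or.inr rfl)) ((hq' b').2 (Or.inr rfl))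
  refine ⟨rfl, ?_⟩
  rcases hb with rfl | rfl
  · rcases hb' with rfl | rfl <;> rfl
  · rfl

end IsKPair

lemma exists_isKPair (hpair : ∀ a b : α, ∃ y, ∀ x, r x y ↔ x = a ∨ x = b) (a b : α) :
    ∃ z, IsKPair r z a b := by
  obtain ⟨p, hp⟩ := hpair a a
  obtain ⟨q, hq⟩ := hpair a b
  obtain ⟨z, hz⟩ := hpair p q
  exact ⟨z, p, q, fun x => (hp x).trans or_self_iff, hq, hz⟩

theorem mem_iff_of_separ_of_extract (hext : ∀ y z : α, (∀ x, r x y ↔ r x z) → y = z)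
    (hpair : ∀ a b : α, ∃ y, ∀ x, r x y ↔ x = a ∨ x = b) (P : α → α → Prop) {A Y : α}
    (hA : ∀ x, r x A ↔ ∃ v w, IsKPair r x v w ∧ ∃ u, (∀ t, r t u ↔ MemExtract r t v) ∧ P w u)
    (hY : ∀ x, r x Y ↔ MemExtract r x A) (x : α) :
    r x Y ↔ P x Y := by
  rw [hY]
  constructor
  · rintro ⟨z, hzx, hzA⟩
    obtain ⟨v, w, hzvw, u, hu, hP⟩ := (hA z).1 hzA
    obtain ⟨rfl, rfl⟩ := hzvw.injective hzx
    rwa [hext u Y fun t => (hu t).trans (hY t).symm] at hP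
  · intro hP
    obtain ⟨z, hz⟩ := exists_isKPair hpair A x
    exact ⟨z, hz, (hA z).2 ⟨A, x, hz, Y, hY, hP⟩⟩

end Kuratowski

section Semantics

variable {M : Type*} [LA.Structure M]

def Mem (a b : M) : Prop := Structure.RelMap memRel ![a, b]

@[simp] lemma realize_memF {n : ℕ} {t₁ t₂ : LA.Term (Empty ⊕ Fin n)} {v : Empty → M}
    {xs : Fin n → M} :
    (memF t₁ t₂).Realize v xs ↔ Mem (t₁.realize (Sum.elim v xs)) (t₂.realize (Sum.elim v xs)) :=
  BoundedFormula.realize_rel₂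

lemma snoc_snoc_snoc_comp_castAdd {α : Sort*} {n : ℕ} (xs : Fin n → α) (p q x : α) :
    (Fin.snoc (Fin.snoc (Fin.snoc xs p) q) x : Fin (n + 3) → α) ∘ Fin.castAdd 3 = xs :=
  funext fun _ => (Fin.snoc_castSucc _ _ _).trans <|
    (Fin.snoc_castSucc _ _ _).trans (Fin.snoc_castSucc _ _ _)

@[simp] lemma realize_isPairF {n : ℕ} {z a b : LA.Term (Empty ⊕ Fin n)} {v : Empty → M}
    {xs : Fin n → M} :
    (isPairF z a b).Realize v xs ↔
      IsKPair Mem (z.realize (Sum.elim v xs)) (a.realize (Sum.elim v xs))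
        (b.realize (Sum.elim v xs)) := by
  simp [isPairF, IsKPair, tl, Sum.elim_comp_map, snoc_snoc_snoc_comp_castAdd, Fin.snoc, and_assoc]

lemma realize_extAx : M ⊨ extAx ↔ ∀ y z : M, (∀ x, Mem x y ↔ Mem x z) → y = z := by
  simp only [extAx, Sentence.Realize, Formula.Realize, BoundedFormula.realize_all,
    BoundedFormula.realize_imp, BoundedFormula.realize_iff, BoundedFormula.realize_bdEqual,
    realize_memF]
  rfl

lemma realize_pairAx : M ⊨ pairAx ↔ ∀ a b : M, ∃ y, ∀ x, Mem x y ↔ x = a ∨ x = b := by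
  simp only [pairAx, Sentence.Realize, Formula.Realize, BoundedFormula.realize_all,
    BoundedFormula.realize_ex, BoundedFormula.realize_iff, BoundedFormula.realize_sup,
    BoundedFormula.realize_bdEqual, realize_memF]
  rfl

lemma realize_extractAx : M ⊨ extractAx ↔ ∀ a : M, ∃ y, ∀ x, Mem x y ↔ MemExtract Mem x a := by
  simp only [extractAx, Sentence.Realize, Formula.Realize, BoundedFormula.realize_all,
    BoundedFormula.realize_ex, BoundedFormula.realize_iff, BoundedFormula.realize_inf,
    realize_memF, realize_isPairF]
  rfl

lemma realize_relabel_phiLA {n : ℕ} (φ : L0.Formula (Fin 2)) (i j : Fin n) (v : Empty → M)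
    (xs : Fin n → M) :
    (BoundedFormula.relabel (fun k => Sum.inr (if k = 0 then i else j)) (phiLA φ)).Realize v xs ↔
      (phiLA φ).Realize ![xs i, xs j] := by
  rw [BoundedFormula.realize_relabel, Formula.Realize]
  congr! 1
  ext k
  fin_cases k <;> rfl

lemma realize_separAx (φ : L0.Formula (Fin 2)) :
    M ⊨ separAx φ ↔ ∀ x : M, Mem x (cA : M) ↔ ∃ v w, IsKPair Mem x v w ∧ ∃ u,
      (∀ t, Mem t u ↔ MemExtract Mem t v) ∧ (phiLA φ).Realize ![w, u] := by
  simp only [separAx, uEqExtractF, Sentence.Realize, Formula.Realize,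
    BoundedFormula.realize_all, BoundedFormula.realize_ex, BoundedFormula.realize_iff,
    BoundedFormula.realize_inf, realize_memF, realize_isPairF, realize_relabel_phiLA,
    Term.realize_constants]
  rfl

end Semantics

/-- Fixed Point Theorem: for any `L`-formula `φ(x,y)` there is an `L_A`-formula `ψ(x)`
in which `y` does not occur free such that `BST ∪ {pair, extract, φ-separ}` semantically
entails `(∃y∀x(x∈y ↔ φ(x,y))) ↔ (∃y∀x(x∈y ↔ ψ(x)))`. -/
theorem fixed_point (φ : L0.Formula (Fin 2)) :
    ∃ ψ : LA.BoundedFormula Empty 1,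
      (BST ∪ {pairAx, extractAx, separAx φ}) ⊨ᵇ
        (((∃' ∀' (memF (&1) (&0) ⇔
            BoundedFormula.relabel (fun i => Sum.inr (if i = 0 then (1 : Fin 2) else 0)) (phiLA φ))) ⇔
          (∃' ∀' (memF (&1) (&0) ⇔ ψ.liftAt 1 0))) : LA.Sentence) := by
  refine ⟨memF (&0) (Constants.term cA), fun M v xs => ?_⟩
  have hT (σ) (hσ : σ ∈ BST ∪ {pairAx, extractAx, separAx φ}) : M ⊨ σ :=
    Theory.realize_sentence_of_mem _ hσ
  have hext := realize_extAx.1 (hT _ (by simp [BST]))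
  have hpair := realize_pairAx.1 (hT _ (by simp))
  have hsep := (realize_separAx φ).1 (hT _ (by simp))
  obtain ⟨Y, hY⟩ := realize_extractAx.1 (hT _ (by simp)) (cA : M)
  have hfix := mem_iff_of_separ_of_extract hext hpair _ hsep hY
  simp only [BoundedFormula.realize_iff, BoundedFormula.realize_ex, BoundedFormula.realize_all,
    realize_memF, realize_relabel_phiLA]
  refine iff_of_true ⟨Y, hfix⟩ ⟨cA, fun x => ?_⟩
  rw [BoundedFormula.realize_liftAt (by simp), realize_memF, Term.realize_constants]
  rfl

end FixedPointTheorem
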